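/- Let (f_n)_{n≥1} be a sequence of continuous affine functions on a compact convex metrizable set K such that for every μ ∈ K the sequence (f_n(μ)) is subadditive (f_{n+m}(μ) ≤ f_n(μ) + f_m(μ)). Then the function μ ↦ inf_n f_n(μ)/n = lim_n f_n(μ)/n is upper semicontinuous and affine on K. -/

import Mathlib

/-!
By Fekete's lemma, `f n μ / n` converges in `EReal` to its infimum over `n ≥ 1`. An infimum of
continuous functions is upper semicontinuous, and affinity passes from each `f n / n` to the limit,
because a nonnegative combination of sequences that do not tend to `⊤` converges to the same
combination of their limits.
-/

open Filter Topology

theorem Subadditive.tendsto_iInf_div_ereal {u : ℕ → ℝ} (h : Subadditive u) :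
    Tendsto (fun n : ℕ => ((u n / n : ℝ) : EReal)) atTop
      (𝓝 (⨅ n : {n : ℕ // 1 ≤ n}, ((u n / n : ℝ) : EReal))) := by
  refine tendsto_order.2 ⟨fun l hl => ?_, fun L hL => ?_⟩
  · filter_upwards [eventually_ge_atTop 1] with n hn
    exact hl.trans_le (iInf_le _ (⟨n, hn⟩ : {n : ℕ // 1 ≤ n}))
  · obtain ⟨⟨n, hn⟩, hnL⟩ := iInf_lt_iff.1 hL
    obtain ⟨c, hnc, hcL⟩ := EReal.exists_between_coe_real hnL
    have hnc' : u n / n < c := EReal.coe_lt_coe_iff.1 hnc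
    filter_upwards [h.eventually_div_lt_of_div_lt (by omega) hnc'] with p hp
    exact (EReal.coe_lt_coe_iff.2 hp).trans hcL

theorem subadditive_update_zero {u : ℕ → ℝ}
    (hsub : ∀ n m : ℕ, 1 ≤ n → 1 ≤ m → u (n + m) ≤ u n + u m) :
    Subadditive (Function.update u 0 0) := by
  intro m n
  rcases Nat.eq_zero_or_pos m with rfl | hm
  · simp
  rcases Nat.eq_zero_or_pos n with rfl | hn
  · simp
  simpa [Function.update_of_ne (by omega : m + n ≠ 0), Function.update_of_ne hm.ne',
    Function.update_of_ne hn.ne'] using hsub m n hm hn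

theorem tendsto_iInf_div_ereal_of_subadditive_pos {u : ℕ → ℝ}
    (hsub : ∀ n m : ℕ, 1 ≤ n → 1 ≤ m → u (n + m) ≤ u n + u m) :
    Tendsto (fun n : ℕ => ((u n / n : ℝ) : EReal)) atTop
      (𝓝 (⨅ n : {n : ℕ // 1 ≤ n}, ((u n / n : ℝ) : EReal))) := by
  -- `u 0` never enters `u n / n`, since `u 0 / 0 = 0`
  have hdiv : ∀ n : ℕ, Function.update u 0 0 n / n = u n / n := by
    rintro (_ | n)
    · simp
    · rw [Function.update_of_ne n.succ_ne_zero]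
  simpa only [hdiv] using (subadditive_update_zero hsub).tendsto_iInf_div_ereal

namespace EReal

theorem coe_mul_ne_top {s : ℝ} (hs : 0 ≤ s) {A : EReal} (hA : A ≠ ⊤) : (s : EReal) * A ≠ ⊤ :=
  (mul_ne_top _ _).2
    ⟨.inl (coe_ne_bot s), .inl (EReal.coe_nonneg.2 hs), .inl (coe_ne_top s), .inr hA⟩

theorem tendsto_coe_nonneg_comb {α : Type*} {l : Filter α} {a b : α → ℝ} {A B : EReal}
    (ha : Tendsto (fun x => (a x : EReal)) l (𝓝 A))
    (hb : Tendsto (fun x => (b x : EReal)) l (𝓝 B))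
    (hA : A ≠ ⊤) (hB : B ≠ ⊤) {s t : ℝ} (hs : 0 ≤ s) (ht : 0 ≤ t) :
    Tendsto (fun x => ((s * a x + t * b x : ℝ) : EReal)) l
      (𝓝 ((s : EReal) * A + (t : EReal) * B)) := by
  have hsa := EReal.Tendsto.const_mul ha (.inl (coe_ne_bot s)) (.inl (coe_ne_top s))
  have htb := EReal.Tendsto.const_mul hb (.inl (coe_ne_bot t)) (.inl (coe_ne_top t))
  have hsum := (continuousAt_add (p := (s * A, t * B)) (.inl (coe_mul_ne_top hs hA))
    (.inr (coe_mul_ne_top ht hB))).tendsto.comp (hsa.prodMk_nhds htb)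
  simpa only [coe_add, coe_mul, Function.comp_def] using hsum

end EReal

theorem iInf_div_ereal_ne_top (u : ℕ → ℝ) :
    (⨅ n : {n : ℕ // 1 ≤ n}, ((u n / n : ℝ) : EReal)) ≠ ⊤ :=
  ((iInf_le (fun n : {n : ℕ // 1 ≤ n} => ((u n / n : ℝ) : EReal)) ⟨1, le_rfl⟩).trans_lt
    (EReal.coe_lt_top _)).ne

theorem stmt6_general {V : Type*} [AddCommGroup V] [Module ℝ V] [TopologicalSpace V]
    (K : Set V) (hconv : Convex ℝ K)
    (f : ℕ → V → ℝ)
    (hcont : ∀ n, 1 ≤ n → ContinuousOn (f n) K)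
    (haff : ∀ n, 1 ≤ n → ∀ μ ∈ K, ∀ ν ∈ K, ∀ t : ℝ, 0 ≤ t → t ≤ 1 →
      f n (t • μ + (1 - t) • ν) = t * f n μ + (1 - t) * f n ν)
    (hsub : ∀ μ ∈ K, ∀ n m : ℕ, 1 ≤ n → 1 ≤ m → f (n + m) μ ≤ f n μ + f m μ) :
    UpperSemicontinuousOn (fun μ => ⨅ n : {n : ℕ // 1 ≤ n}, ((f n μ / n : ℝ) : EReal)) K ∧
    (∀ μ ∈ K, Tendsto (fun n : ℕ => ((f n μ / n : ℝ) : EReal)) atTop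
      (nhds (⨅ n : {n : ℕ // 1 ≤ n}, ((f n μ / n : ℝ) : EReal)))) ∧
    (∀ μ ∈ K, ∀ ν ∈ K, ∀ t : ℝ, 0 ≤ t → t ≤ 1 →
      (⨅ n : {n : ℕ // 1 ≤ n}, ((f n (t • μ + (1 - t) • ν) / n : ℝ) : EReal)) =
        (t : EReal) * (⨅ n : {n : ℕ // 1 ≤ n}, ((f n μ / n : ℝ) : EReal)) +
        ((1 - t : ℝ) : EReal) * (⨅ n : {n : ℕ // 1 ≤ n}, ((f n ν / n : ℝ) : EReal))) := by
  have hlim μ (hμ : μ ∈ K) :=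
    tendsto_iInf_div_ereal_of_subadditive_pos (u := fun n => f n μ) (hsub μ hμ)
  refine ⟨upperSemicontinuousOn_iInf fun ⟨n, hn⟩ => ?_, hlim, fun μ hμ ν hν t ht ht1 => ?_⟩
  · exact (continuous_coe_real_ereal.comp_continuousOn
      ((hcont n hn).div_const _)).upperSemicontinuousOn
  have hcomb := EReal.tendsto_coe_nonneg_comb (hlim μ hμ) (hlim ν hν)
    (iInf_div_ereal_ne_top fun n => f n μ) (iInf_div_ereal_ne_top fun n => f n ν)
    ht (sub_nonneg.2 ht1)
  have hdiv : (fun n : ℕ => ((f n (t • μ + (1 - t) • ν) / n : ℝ) : EReal)) =ᶠ[atTop]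
      fun n : ℕ => ((t * (f n μ / n) + (1 - t) * (f n ν / n) : ℝ) : EReal) := by
    filter_upwards [eventually_ge_atTop 1] with n hn
    rw [haff n hn μ hμ ν hν t ht ht1, add_div, mul_div_assoc, mul_div_assoc]
  have hmem : t • μ + (1 - t) • ν ∈ K := hconv hμ hν ht (by linarith) (by ring)
  exact tendsto_nhds_unique ((hlim _ hmem).congr' hdiv) hcomb

/-- If `(f_n)_{n≥1}` is a sequence of continuous affine functions on a compact convex
metrizable set `K` such that `(f_n(μ))_n` is subadditive for each `μ ∈ K`, then
`μ ↦ inf_n f_n(μ)/n = lim_n f_n(μ)/n` is upper semicontinuous and affine on `K`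
(values taken in `EReal` since the limit of a subadditive sequence may be `-∞`). -/
theorem stmt6 {V : Type*} [AddCommGroup V] [Module ℝ V] [TopologicalSpace V]
    [IsTopologicalAddGroup V] [ContinuousSMul ℝ V]
    (K : Set V) (hK : IsCompact K) (hconv : Convex ℝ K) (hmetr : TopologicalSpace.MetrizableSpace K)
    (f : ℕ → V → ℝ)
    (hcont : ∀ n, 1 ≤ n → ContinuousOn (f n) K)
    (haff : ∀ n, 1 ≤ n → ∀ μ ∈ K, ∀ ν ∈ K, ∀ t : ℝ, 0 ≤ t → t ≤ 1 →
      f n (t • μ + (1 - t) • ν) = t * f n μ + (1 - t) * f n ν)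
    (hsub : ∀ μ ∈ K, ∀ n m : ℕ, 1 ≤ n → 1 ≤ m → f (n + m) μ ≤ f n μ + f m μ) :
    UpperSemicontinuousOn (fun μ => ⨅ n : {n : ℕ // 1 ≤ n}, ((f n μ / n : ℝ) : EReal)) K ∧
    (∀ μ ∈ K, Tendsto (fun n : ℕ => ((f n μ / n : ℝ) : EReal)) atTop
      (nhds (⨅ n : {n : ℕ // 1 ≤ n}, ((f n μ / n : ℝ) : EReal)))) ∧
    (∀ μ ∈ K, ∀ ν ∈ K, ∀ t : ℝ, 0 ≤ t → t ≤ 1 →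
      (⨅ n : {n : ℕ // 1 ≤ n}, ((f n (t • μ + (1 - t) • ν) / n : ℝ) : EReal)) =
        (t : EReal) * (⨅ n : {n : ℕ // 1 ≤ n}, ((f n μ / n : ℝ) : EReal)) +
        ((1 - t : ℝ) : EReal) * (⨅ n : {n : ℕ // 1 ≤ n}, ((f n ν / n : ℝ) : EReal))) :=
  stmt6_general K hconv f hcont haff hsub
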